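/- arXiv:1710.05352 — 2 statements merged into one kernel-verified Lean document; each statement's English description precedes it below -/
import Mathlib

section
/- L² lower bound (Riesz system): assume additionally that f is not m-a.e. equal to an indicator function, and set c_f := √(∫_𝕋 f(1−f) dm) > 0. Then for every finitely supported complex sequence (a_n)_{n∈ℤ}, ‖ ∑_{n∈ℤ} a_n (ξ_n − σ) ‖_{L²(ℙ)} ≥ c_f (∑_{n∈ℤ} |a_n|²)^{1/2}. -/
/-!
The one- and two-point correlations of the process give
`Cov(ξ_n, ξ_m) = σ δ_{nm} - |f̂(n - m)|²`, so the variance of `∑ aₙ (ξₙ - σ)` is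
`σ ∑ |aₙ|² - ∑_{n,m} aₙ āₘ |f̂(n - m)|²`. The Toeplitz form with the nonnegative symbol `|f̂|²` is
bounded by the Schur test by `(∑_k |f̂(k)|²) ∑ |aₙ|²`, which equals `(∫ f²) ∑ |aₙ|²` by Parseval,
and `σ - ∫ f² = ∫ f (1 - f)`.
-/

open MeasureTheory Complex Filter Finset
open scoped ENNReal

noncomputable def fhat (f : AddCircle (1:ℝ) → ℝ) (k : ℤ) : ℂ :=
  fourierCoeff (fun t => (f t : ℂ)) k

open ProbabilityTheory ComplexConjugate

lemma re_mul_conj_le_half_add_sq (z w : ℂ) : (z * conj w).re ≤ (‖z‖ ^ 2 + ‖w‖ ^ 2) / 2 := by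
  have h := (z * conj w).re_le_norm
  rw [norm_mul, RCLike.norm_conj] at h
  nlinarith [sq_nonneg (‖z‖ - ‖w‖)]

/-- Schur test: every row and column sum of `c (n - m)` is a partial sum of `c`. -/
lemma sum_sum_re_mul_conj_mul_le {G : Type*} [AddGroup G] {c : G → ℝ} (hc : ∀ k, 0 ≤ c k)
    {S : ℝ} (hS : ∀ t : Finset G, ∑ k ∈ t, c k ≤ S) (s : Finset G) (a : G → ℂ) :
    ∑ n ∈ s, ∑ m ∈ s, (a n * conj (a m)).re * c (n - m) ≤ S * ∑ n ∈ s, ‖a n‖ ^ 2 := by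
  have hrow : ∀ n, ∑ m ∈ s, c (n - m) ≤ S := fun n => by
    simpa using hS (s.map (Equiv.subLeft n).toEmbedding)
  have hcol : ∀ m, ∑ n ∈ s, c (n - m) ≤ S := fun m => by
    simpa using hS (s.map (Equiv.subRight m).toEmbedding)
  calc ∑ n ∈ s, ∑ m ∈ s, (a n * conj (a m)).re * c (n - m)
      ≤ ∑ n ∈ s, ∑ m ∈ s, (‖a n‖ ^ 2 * c (n - m) + ‖a m‖ ^ 2 * c (n - m)) / 2 := by
        gcongr with n _ m _
        rw [← add_mul, mul_div_right_comm]
        exact mul_le_mul_of_nonneg_right (re_mul_conj_le_half_add_sq _ _) (hc _)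
    _ = (∑ n ∈ s, ‖a n‖ ^ 2 * ∑ m ∈ s, c (n - m)
          + ∑ m ∈ s, ‖a m‖ ^ 2 * ∑ n ∈ s, c (n - m)) / 2 := by
        simp only [← sum_div, sum_add_distrib, mul_sum]
        congr 2
        exact sum_comm
    _ ≤ (∑ n ∈ s, ‖a n‖ ^ 2 * S + ∑ m ∈ s, ‖a m‖ ^ 2 * S) / 2 := by
        gcongr with n _ m _
        exacts [hrow n, hcol m]
    _ = S * ∑ n ∈ s, ‖a n‖ ^ 2 := by rw [← sum_mul]; ring

lemma norm_sum_mul_ofReal_sq {ι : Type*} (s : Finset ι) (a : ι → ℂ) (y : ι → ℝ) :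
    ‖∑ n ∈ s, a n * y n‖ ^ 2 = ∑ n ∈ s, ∑ m ∈ s, (a n * conj (a m)).re * (y n * y m) := by
  rw [← normSq_eq_norm_sq, ← ofReal_re (normSq _), ← mul_conj, map_sum, sum_mul_sum, re_sum]
  refine sum_congr rfl fun n _ => ?_
  rw [re_sum]
  refine sum_congr rfl fun m _ => ?_
  rw [map_mul, conj_ofReal, show a n * y n * (conj (a m) * y m)
    = a n * conj (a m) * ((y n * y m : ℝ) : ℂ) by push_cast; ring, re_mul_ofReal]

lemma integral_norm_sum_mul_ofReal_sq {Ω ι : Type*} [MeasurableSpace Ω] {P : Measure Ω}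
    {Y : ι → Ω → ℝ} (hY : ∀ n, MemLp (Y n) 2 P) (s : Finset ι) (a : ι → ℂ) :
    ∫ ω, ‖∑ n ∈ s, a n * Y n ω‖ ^ 2 ∂P
      = ∑ n ∈ s, ∑ m ∈ s, (a n * conj (a m)).re * ∫ ω, Y n ω * Y m ω ∂P := by
  have hint : ∀ n m, Integrable (fun ω => Y n ω * Y m ω) P := fun n m =>
    (hY n).integrable_mul (hY m)
  simp_rw [norm_sum_mul_ofReal_sq]
  rw [integral_finsetSum _ fun n _ => integrable_finsetSum _ fun m _ => (hint n m).const_mul _]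
  refine sum_congr rfl fun n _ => ?_
  rw [integral_finsetSum _ fun m _ => (hint n m).const_mul _]
  exact sum_congr rfl fun m _ => integral_const_mul _ _

lemma MeasureTheory.MemLp.eLpNorm_two_eq_ofReal_sqrt {Ω E : Type*} [MeasurableSpace Ω]
    [NormedAddCommGroup E] {P : Measure Ω} {X : Ω → E} (hX : MemLp X 2 P) :
    eLpNorm X 2 P = ENNReal.ofReal √(∫ ω, ‖X ω‖ ^ 2 ∂P) := by
  rw [hX.eLpNorm_eq_integral_rpow_norm two_ne_zero ENNReal.ofNat_ne_top, Real.sqrt_eq_rpow]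
  norm_num

lemma fhat_zero (f : AddCircle (1:ℝ) → ℝ) : fhat f 0 = ∫ t, f t ∂AddCircle.haarAddCircle := by
  simp only [fhat, fourierCoeff, neg_zero, fourier_zero, one_smul]
  exact integral_ofReal

lemma fhat_neg (f : AddCircle (1:ℝ) → ℝ) (k : ℤ) : fhat f (-k) = conj (fhat f k) := by
  simp only [fhat, fourierCoeff, ← integral_conj, smul_eq_mul, map_mul, conj_ofReal, neg_neg,
    ← fourier_neg]

lemma hasSum_normSq_fhat {f : AddCircle (1:ℝ) → ℝ} (hf : MemLp f 2 AddCircle.haarAddCircle) :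
    HasSum (fun k => normSq (fhat f k)) (∫ t, f t ^ 2 ∂AddCircle.haarAddCircle) := by
  have hfℂ : MemLp (fun t => (f t : ℂ)) 2 AddCircle.haarAddCircle := hf.ofReal
  convert hasSum_sq_fourierCoeff hfℂ.toLp using 1
  · ext k
    rw [normSq_eq_norm_sq, fhat, fourierCoeff_congr_ae hfℂ.coeFn_toLp]
  · refine integral_congr_ae ?_
    filter_upwards [hfℂ.coeFn_toLp] with t ht
    rw [ht, norm_real, Real.norm_eq_abs, sq_abs]

lemma memLp_of_forall_eq_zero_or_eq_one {Ω : Type*} [MeasurableSpace Ω] {P : Measure Ω}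
    [IsFiniteMeasure P] {X : Ω → ℝ} (hX : Measurable X) (h01 : ∀ ω, X ω = 0 ∨ X ω = 1)
    (p : ℝ≥0∞) : MemLp X p P :=
  .of_bound hX.aestronglyMeasurable 1 (ae_of_all _ fun ω => by rcases h01 ω with h | h <;> simp [h])

/-- `ξ` is the stationary determinantal point process on `ℤ` with kernel `(n, m) ↦ K (n - m)`. -/
def IsStationaryDPP {Ω : Type*} [MeasurableSpace Ω] (P : Measure Ω) (ξ : ℤ → Ω → ℝ)
    (K : ℤ → ℂ) : Prop :=
  ∀ (k : ℕ) (n : Fin k → ℤ), Function.Injective n →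
    ((∫ ω, ∏ i, ξ (n i) ω ∂P : ℝ) : ℂ) = Matrix.det (Matrix.of fun i j => K (n i - n j))

namespace IsStationaryDPP

variable {Ω : Type*} [MeasurableSpace Ω] {P : Measure Ω} {ξ : ℤ → Ω → ℝ} {K : ℤ → ℂ}

lemma integral_eq (h : IsStationaryDPP P ξ K) (n : ℤ) : ((∫ ω, ξ n ω ∂P : ℝ) : ℂ) = K 0 := by
  simpa using h 1 (fun _ => n) (Function.injective_of_subsingleton _)

lemma integral_mul_eq (h : IsStationaryDPP P ξ K) {n m : ℤ} (hnm : n ≠ m) :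
    ((∫ ω, ξ n ω * ξ m ω ∂P : ℝ) : ℂ) = K 0 * K 0 - K (n - m) * K (m - n) := by
  have hinj : Function.Injective ![n, m] := by
    intro i j hij
    fin_cases i <;> fin_cases j <;> simp_all [eq_comm]
  simpa [Fin.prod_univ_two, Matrix.det_fin_two] using h 2 ![n, m] hinj

variable [IsProbabilityMeasure P] {σ : ℝ}

lemma covariance_eq (h : IsStationaryDPP P ξ K) (hmeas : ∀ n, Measurable (ξ n))
    (h01 : ∀ n ω, ξ n ω = 0 ∨ ξ n ω = 1) (hK0 : K 0 = σ) (hKneg : ∀ k, K (-k) = conj (K k))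
    (n m : ℤ) : cov[ξ n, ξ m; P] = (if n = m then σ else 0) - normSq (K (n - m)) := by
  have hL2 : ∀ n, MemLp (ξ n) 2 P := fun n => memLp_of_forall_eq_zero_or_eq_one (hmeas n) (h01 n) 2
  have hmean : ∀ n, P[ξ n] = σ := fun n => by exact_mod_cast (h.integral_eq n).trans hK0
  rw [covariance_eq_sub (hL2 n) (hL2 m), hmean, hmean]
  rcases eq_or_ne n m with rfl | hnm
  · have hsq : ξ n * ξ n = ξ n := funext fun ω => by rcases h01 n ω with h | h <;> simp [h]
    rw [hsq, hmean]
    simp [hK0, normSq_ofReal]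
  · have hKm : K (m - n) = conj (K (n - m)) := by rw [← hKneg, neg_sub]
    have hmul : ∫ ω, ξ n ω * ξ m ω ∂P = σ * σ - normSq (K (n - m)) := by
      have := h.integral_mul_eq hnm
      rw [hKm, mul_conj, hK0] at this
      exact_mod_cast this
    simp only [Pi.mul_apply, hmul, if_neg hnm]
    ring

theorem mul_sum_sq_le_integral_norm_sq (h : IsStationaryDPP P ξ K)
    (hmeas : ∀ n, Measurable (ξ n)) (h01 : ∀ n ω, ξ n ω = 0 ∨ ξ n ω = 1) (hK0 : K 0 = σ)
    (hKneg : ∀ k, K (-k) = conj (K k)) {S : ℝ} (hS : ∀ t : Finset ℤ, ∑ k ∈ t, normSq (K k) ≤ S)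
    (s : Finset ℤ) (a : ℤ → ℂ) :
    (σ - S) * ∑ n ∈ s, ‖a n‖ ^ 2 ≤ ∫ ω, ‖∑ n ∈ s, a n * ((ξ n ω : ℂ) - σ)‖ ^ 2 ∂P := by
  have hmean : ∀ n, P[ξ n] = σ := fun n => by exact_mod_cast (h.integral_eq n).trans hK0
  have hcentered : ∀ n, MemLp (fun ω => ξ n ω - σ) 2 P := fun n =>
    (memLp_of_forall_eq_zero_or_eq_one (hmeas n) (h01 n) 2).sub (memLp_const σ)
  have hdiag : ∑ n ∈ s, ∑ m ∈ s, (a n * conj (a m)).re * (if n = m then σ else 0)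
      = σ * ∑ n ∈ s, ‖a n‖ ^ 2 := by
    simp only [mul_ite, mul_zero, sum_ite_eq, mul_sum]
    refine sum_congr rfl fun n hn => ?_
    rw [if_pos hn, mul_conj, ofReal_re, normSq_eq_norm_sq, mul_comm]
  have hoff := sum_sum_re_mul_conj_mul_le (fun k => normSq_nonneg (K k)) hS s a
  calc (σ - S) * ∑ n ∈ s, ‖a n‖ ^ 2
      ≤ ∑ n ∈ s, ∑ m ∈ s, (a n * conj (a m)).re * cov[ξ n, ξ m; P] := by
        simp only [h.covariance_eq hmeas h01 hK0 hKneg, mul_sub, sum_sub_distrib, hdiag]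
        linarith
    _ = ∫ ω, ‖∑ n ∈ s, a n * ((ξ n ω : ℂ) - σ)‖ ^ 2 ∂P := by
        simp only [← ofReal_sub, integral_norm_sum_mul_ofReal_sq hcentered, covariance, hmean]

end IsStationaryDPP

theorem stmt_11_general
    (f : AddCircle (1:ℝ) → ℝ) (hf_meas : Measurable f)
    (hf01 : ∀ t, f t ∈ Set.Icc (0:ℝ) 1)
    (σ : ℝ) (hσ : σ = ∫ t, f t ∂AddCircle.haarAddCircle)
    {Ω : Type*} [MeasurableSpace Ω] (P : Measure Ω) [IsProbabilityMeasure P]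
    (ξ : ℤ → Ω → ℝ) (hξ_meas : ∀ n, Measurable (ξ n))
    (hξ01 : ∀ n ω, ξ n ω = 0 ∨ ξ n ω = 1)
    (hDPP : ∀ (k : ℕ) (n : Fin k → ℤ), Function.Injective n →
      ((∫ ω, ∏ i, ξ (n i) ω ∂P : ℝ) : ℂ) =
        Matrix.det (Matrix.of fun i j => fhat f (n i - n j))) :
    ∀ a : ℤ →₀ ℂ,
      ENNReal.ofReal (Real.sqrt (∫ t, f t * (1 - f t) ∂AddCircle.haarAddCircle) *
          Real.sqrt (∑ n ∈ a.support, ‖a n‖^2)) ≤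
        eLpNorm (fun ω => ∑ n ∈ a.support, a n * ((ξ n ω : ℂ) - (σ:ℂ))) 2 P := by
  intro a
  have hfL2 : MemLp f 2 AddCircle.haarAddCircle :=
    .of_bound hf_meas.aestronglyMeasurable 1 (ae_of_all _ fun t => by
      rw [Real.norm_eq_abs, abs_le]
      constructor <;> linarith [(hf01 t).1, (hf01 t).2])
  have hvar := IsStationaryDPP.mul_sum_sq_le_integral_norm_sq (σ := σ) hDPP hξ_meas hξ01
    (by rw [fhat_zero, hσ]) (fhat_neg f)
    (fun t => sum_le_hasSum t (fun k _ => normSq_nonneg _) (hasSum_normSq_fhat hfL2)) a.support a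
  have hvariance : ∫ t, f t * (1 - f t) ∂AddCircle.haarAddCircle
      = σ - ∫ t, f t ^ 2 ∂AddCircle.haarAddCircle := by
    rw [hσ, ← integral_sub (hfL2.integrable one_le_two) hfL2.integrable_sq]
    simp only [mul_sub, mul_one, sq]
  have hX : MemLp (fun ω => ∑ n ∈ a.support, a n * ((ξ n ω : ℂ) - (σ:ℂ))) 2 P :=
    memLp_finsetSum _ fun n _ =>
      (((memLp_of_forall_eq_zero_or_eq_one (hξ_meas n) (hξ01 n) 2).ofReal).sub
        (memLp_const _)).const_mul (a n)
  rw [hX.eLpNorm_two_eq_ofReal_sqrt, ← Real.sqrt_mul (integral_nonneg fun t =>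
    mul_nonneg (hf01 t).1 (sub_nonneg.2 (hf01 t).2))]
  gcongr
  rwa [hvariance]

/-- Riesz lower bound: if f is not a.e. an indicator, then
‖∑ a_n (ξ_n − σ)‖_{L²} ≥ c_f (∑|a_n|²)^{1/2} with c_f = √(∫ f(1−f)). -/
theorem stmt_11
    (f : AddCircle (1:ℝ) → ℝ) (hf_meas : Measurable f)
    (hf01 : ∀ t, f t ∈ Set.Icc (0:ℝ) 1)
    (σ : ℝ) (hσ : σ = ∫ t, f t ∂AddCircle.haarAddCircle)
    (hσ0 : 0 < σ) (hσ1 : σ < 1)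
    {Ω : Type*} [MeasurableSpace Ω] (P : Measure Ω) [IsProbabilityMeasure P]
    (ξ : ℤ → Ω → ℝ) (hξ_meas : ∀ n, Measurable (ξ n))
    (hξ01 : ∀ n ω, ξ n ω = 0 ∨ ξ n ω = 1)
    (hDPP : ∀ (k : ℕ) (n : Fin k → ℤ), Function.Injective n →
      ((∫ ω, ∏ i, ξ (n i) ω ∂P : ℝ) : ℂ) =
        Matrix.det (Matrix.of fun i j => fhat f (n i - n j)))
    (hind : 0 < ∫ t, f t * (1 - f t) ∂AddCircle.haarAddCircle) :
    ∀ a : ℤ →₀ ℂ,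
      ENNReal.ofReal (Real.sqrt (∫ t, f t * (1 - f t) ∂AddCircle.haarAddCircle) *
          Real.sqrt (∑ n ∈ a.support, ‖a n‖^2)) ≤
        eLpNorm (fun ω => ∑ n ∈ a.support, a n * ((ξ n ω : ℂ) - (σ:ℂ))) 2 P :=
  stmt_11_general f hf_meas hf01 σ hσ P ξ hξ_meas hξ01 hDPP
end

section
/- Generalized Davenport–Erdős–LeVeque theorem: let d ≥ 1, let (Ω, 𝒜, ℙ) be a probability space, and let (ξ_k)_{k ∈ (ℕ_{≥1})^d} be real random variables with sup_k ‖ξ_k‖_∞ < ∞. Define X_n = n^{−d} ∑_{k ∈ {1,…,n}^d} ξ_k for n ≥ 1. If ∑_{n=1}^∞ 𝔼[X_n²]/n < ∞, then X_n → 0 ℙ-almost surely as n → ∞. -/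
open MeasureTheory Filter Finset



set_option maxHeartbeats 1000000 in
lemma det_lemma (K : ℝ) (hK : 0 < K) (a : ℕ → ℝ)
    (hlip : ∀ n m : ℕ, 1 ≤ n → n ≤ m → |a m - a n| ≤ K * ((m : ℝ) - n) / n)
    (hsum : Summable (fun n : ℕ => a n ^ 2 / n)) :
    Tendsto a atTop (nhds 0) := by
  have hf0 : ∀ n : ℕ, 0 ≤ a n ^ 2 / (n : ℝ) :=
    fun n => div_nonneg (sq_nonneg _) (Nat.cast_nonneg n)
  rw [Metric.tendsto_atTop]
  intro ε hε
  set ε' := min ε (2 * K) with hε'def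
  have hε'pos : 0 < ε' := lt_min hε (by linarith)
  have hε'K : ε' ≤ 2 * K := min_le_right _ _
  have hε'ε : ε' ≤ ε := min_le_left _ _
  clear_value ε'
  set δ := ε' ^ 3 / (32 * K) with hδdef
  have hδ : 0 < δ := div_pos (pow_pos hε'pos 3) (by linarith)
  clear_value δ
  set T := ∑' n, a n ^ 2 / (n:ℝ) with hT
  obtain ⟨N, hN⟩ : ∃ N, T - δ < ∑ m ∈ Finset.range N, a m ^ 2 / (m:ℝ) := by
    have h1 := hsum.hasSum.tendsto_sum_nat
    have h2 := h1.eventually (eventually_gt_nhds (show T - δ < T by linarith))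
    exact h2.exists
  have htail : ∀ n n' : ℕ, N ≤ n → n ≤ n' →
      ∑ m ∈ Finset.Ico n n', a m ^ 2 / (m:ℝ) < δ := by
    intro n n' hn hnn'
    have h1 : ∑ m ∈ Finset.range n', a m ^ 2 / (m:ℝ) ≤ T :=
      Summable.sum_le_tsum _ (fun i _ => hf0 i) hsum
    have h2 : ∑ m ∈ Finset.range N, a m ^ 2 / (m:ℝ) ≤ ∑ m ∈ Finset.range n, a m ^ 2 / (m:ℝ) :=
      Finset.sum_le_sum_of_subset_of_nonneg (Finset.range_subset_range.2 hn) (fun i _ _ => hf0 i)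
    rw [Finset.sum_Ico_eq_sub _ hnn']
    linarith
  clear_value T
  refine ⟨max (max N 1) ⌈4 * K / ε'⌉₊, fun n hn => ?_⟩
  have hn1 : 1 ≤ n := le_trans (le_max_right N 1) (le_trans (le_max_left _ _) hn)
  have hnN : N ≤ n := le_trans (le_max_left N 1) (le_trans (le_max_left _ _) hn)
  have hnc : 4 * K / ε' ≤ (n:ℝ) := by
    have h : ⌈4 * K / ε'⌉₊ ≤ n := le_trans (le_max_right _ _) hn
    exact le_trans (Nat.le_ceil _) (by exact_mod_cast h)
  have hn0 : (0:ℝ) < n := by exact_mod_cast hn1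
  rw [Real.dist_eq, sub_zero]
  by_contra hcon
  push_neg at hcon
  have hεa : ε' ≤ |a n| := le_trans hε'ε hcon
  set L := ⌊ε' * n / (4 * K)⌋₊ with hL
  have h4K : (0:ℝ) < 4 * K := by linarith
  have hx1 : (1:ℝ) ≤ ε' * n / (4 * K) := by
    rw [le_div_iff₀ h4K]
    rw [div_le_iff₀ hε'pos] at hnc
    nlinarith
  have hLle : (L:ℝ) ≤ ε' * n / (4 * K) := Nat.floor_le (by positivity)
  have hLge : ε' * n / (4 * K) ≤ (L:ℝ) + 1 := (Nat.lt_floor_add_one _).le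
  clear_value L
  have hkey : ∀ m ∈ Finset.Icc n (n + L), ε' ^ 2 / 4 / (2 * n) ≤ a m ^ 2 / m := by
    intro m hm
    rw [Finset.mem_Icc] at hm
    have hm1 : (n:ℝ) ≤ m := by exact_mod_cast hm.1
    have hm2 : (m:ℝ) ≤ n + L := by exact_mod_cast hm.2
    have hm2n : (m:ℝ) ≤ 2 * n := by
      have hLn : (L:ℝ) ≤ n := by
        refine le_trans hLle ?_
        rw [div_le_iff₀ h4K]
        nlinarith
      linarith
    have hlipm := hlip n m hn1 hm.1
    have hbd : |a m - a n| ≤ ε' / 4 := by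
      refine le_trans hlipm ?_
      rw [div_le_iff₀ hn0]
      have h4 : K * ((m:ℝ) - n) ≤ K * L := by nlinarith
      have h5 : K * (L:ℝ) ≤ ε' * n / 4 := by
        rw [le_div_iff₀ h4K] at hLle
        nlinarith
      linarith
    have habs : ε' / 2 ≤ |a m| := by
      have h6 := abs_sub_abs_le_abs_sub (a n) (a m)
      rw [abs_sub_comm] at hbd
      linarith
    have hsq : ε' ^ 2 / 4 ≤ a m ^ 2 := by
      have h7 : (ε' / 2) ^ 2 ≤ |a m| ^ 2 := by
        apply pow_le_pow_left₀ (by linarith) habs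
      rw [sq_abs] at h7
      have h8 : (ε' / 2) ^ 2 = ε' ^ 2 / 4 := by ring
      linarith
    have hm0 : (0:ℝ) < (m:ℝ) := lt_of_lt_of_le hn0 hm1
    exact div_le_div₀ (sq_nonneg _) hsq hm0 hm2n
  have hcard : (Finset.Icc n (n + L)).card = L + 1 := by
    rw [Nat.card_Icc]; omega
  have hsumge : ((L:ℝ) + 1) * (ε' ^ 2 / 4 / (2 * n)) ≤ ∑ m ∈ Finset.Icc n (n + L), a m ^ 2 / m := by
    have h7 : (Finset.Icc n (n + L)).card • (ε' ^ 2 / 4 / (2 * (n:ℝ)))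
        ≤ ∑ m ∈ Finset.Icc n (n + L), a m ^ 2 / (m:ℝ) :=
      Finset.card_nsmul_le_sum _ _ _ hkey
    rwa [hcard, nsmul_eq_mul, Nat.cast_add, Nat.cast_one] at h7
  have h9 : δ ≤ ((L:ℝ) + 1) * (ε' ^ 2 / 4 / (2 * n)) := by
    have h10 : ε' * n / (4 * K) * (ε' ^ 2 / 4 / (2 * n)) = ε' ^ 3 / (32 * K) := by
      rw [div_mul_div_comm, div_eq_div_iff (by nlinarith) (by linarith)]
      ring
    rw [hδdef, ← h10]
    have hb : (0:ℝ) ≤ ε' ^ 2 / 4 / (2 * n) :=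
      div_nonneg (div_nonneg (sq_nonneg _) (by norm_num)) (by linarith)
    exact mul_le_mul_of_nonneg_right hLge hb
  have hIcoIcc : Finset.Icc n (n + L) = Finset.Ico n (n + L + 1) := by
    rw [Finset.Ico_add_one_right_eq_Icc]
  have h11 := htail n (n + L + 1) hnN (by omega)
  rw [← hIcoIcc] at h11
  linarith

-- Bernoulli-type bound
lemma bern_bound (d : ℕ) (n m : ℕ) (hn : 1 ≤ n) (hnm : n ≤ m) :
    ((m:ℝ)^d - (n:ℝ)^d) / (m:ℝ)^d ≤ (d:ℝ) * (((m:ℝ) - n) / n) := by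
  have hnr : (0:ℝ) < n := by exact_mod_cast hn
  have hmr : (0:ℝ) < m := lt_of_lt_of_le hnr (by exact_mod_cast hnm)
  have hmd : (0:ℝ) < (m:ℝ)^d := pow_pos hmr d
  have hnm' : (n:ℝ) ≤ m := by exact_mod_cast hnm
  have hx : (n:ℝ)/m ≤ 1 := by rw [div_le_one hmr]; exact hnm'
  have hx0 : (0:ℝ) ≤ (n:ℝ)/m := by positivity
  have hb := one_add_mul_le_pow (a := (n:ℝ)/m - 1) (by linarith : (-2:ℝ) ≤ (n:ℝ)/m - 1) d
  have he : (1 + ((n:ℝ)/m - 1)) = (n:ℝ)/m := by ring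
  rw [he] at hb
  have hdp : ((n:ℝ)/m)^d = (n:ℝ)^d/(m:ℝ)^d := div_pow _ _ d
  rw [hdp] at hb
  have e1 : ((m:ℝ)^d - (n:ℝ)^d) / (m:ℝ)^d = 1 - (n:ℝ)^d/(m:ℝ)^d := by
    field_simp
  rw [e1]
  have step1 : 1 - (n:ℝ)^d/(m:ℝ)^d ≤ (d:ℝ) * (1 - (n:ℝ)/m) := by nlinarith
  refine le_trans step1 ?_
  apply mul_le_mul_of_nonneg_left _ (Nat.cast_nonneg d)
  have e2 : 1 - (n:ℝ)/m = ((m:ℝ) - n)/m := by field_simp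
  rw [e2, div_le_div_iff₀ hmr hnr]
  nlinarith

/-- Generalized Davenport–Erdős–LeVeque theorem: for uniformly (essentially) bounded
random variables (ξ_k)_{k ∈ (ℕ≥1)^d}, if X_n = n^{-d} ∑_{k ∈ {1,…,n}^d} ξ_k satisfies
∑ 𝔼[X_n²]/n < ∞, then X_n → 0 almost surely. -/
theorem stmt_18
    {Ω : Type*} [MeasurableSpace Ω] (P : Measure Ω) [IsProbabilityMeasure P]
    (d : ℕ) (hd : 1 ≤ d)
    (ξ : (Fin d → ℕ) → Ω → ℝ) (hmeas : ∀ k, Measurable (ξ k))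
    (hbdd : ∃ C : ℝ, ∀ k : Fin d → ℕ, ∀ᵐ ω ∂P, |ξ k ω| ≤ C)
    (X : ℕ → Ω → ℝ)
    (hX : ∀ n ω, X n ω =
      (∑ k ∈ Fintype.piFinset (fun _ : Fin d => Finset.Icc 1 n), ξ k ω) / (n:ℝ)^d)
    (hsum : Summable (fun n : ℕ => (∫ ω, (X n ω)^2 ∂P) / n)) :
    ∀ᵐ ω ∂P, Tendsto (fun n : ℕ => X n ω) atTop (nhds 0) := by
  obtain ⟨C₀, hC₀⟩ := hbdd
  set C := max C₀ 1 with hCdef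
  have hC1 : (1:ℝ) ≤ C := le_max_right _ _
  have hCpos : (0:ℝ) < C := by linarith
  have hE : ∀ᵐ ω ∂P, ∀ k : Fin d → ℕ, |ξ k ω| ≤ C := by
    rw [ae_all_iff]
    intro k
    filter_upwards [hC₀ k] with ω h using le_trans h (le_max_left _ _)
  have hd0 : d ≠ 0 := by omega
  have hXmeas : ∀ n, Measurable (X n) := by
    intro n
    have h : X n = fun ω => (∑ k ∈ Fintype.piFinset (fun _ : Fin d => Finset.Icc 1 n), ξ k ω) / (n:ℝ)^d := funext (hX n)
    rw [h]
    exact (Finset.measurable_sum _ (fun k _ => hmeas k)).div_const _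
  have hcard : ∀ n : ℕ, (Fintype.piFinset (fun _ : Fin d => Finset.Icc 1 n)).card = n ^ d := by
    intro n
    rw [Fintype.card_piFinset]
    simp [Nat.card_Icc]
  -- pointwise bound for |X n ω| on the good event
  have hSbd : ∀ ω, (∀ k : Fin d → ℕ, |ξ k ω| ≤ C) → ∀ n : ℕ,
      |∑ k ∈ Fintype.piFinset (fun _ : Fin d => Finset.Icc 1 n), ξ k ω| ≤ (n:ℝ)^d * C := by
    intro ω hω n
    refine le_trans (Finset.abs_sum_le_sum_abs _ _) ?_
    have h1 : ∑ k ∈ Fintype.piFinset (fun _ : Fin d => Finset.Icc 1 n), |ξ k ω|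
        ≤ (Fintype.piFinset (fun _ : Fin d => Finset.Icc 1 n)).card • C :=
      Finset.sum_le_card_nsmul _ _ _ (fun k _ => hω k)
    rw [hcard, nsmul_eq_mul] at h1
    refine le_trans h1 ?_
    rw [Nat.cast_pow]
  have hXbd : ∀ᵐ ω ∂P, ∀ n, |X n ω| ≤ C := by
    filter_upwards [hE] with ω hω
    intro n
    rcases Nat.eq_zero_or_pos n with h0 | hpos
    · subst h0
      rw [hX]
      simp [zero_pow hd0]
      linarith
    · rw [hX, abs_div]
      have hnd : (0:ℝ) < (n:ℝ)^d := by
        have : (0:ℝ) < n := by exact_mod_cast hpos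
        positivity
      rw [abs_of_pos hnd, div_le_iff₀ hnd]
      have := hSbd ω hω n
      linarith [this]
  -- integrability
  have hXsq_int : ∀ n, Integrable (fun ω => X n ω ^ 2) P := by
    intro n
    refine Integrable.mono' (integrable_const (C^2)) ((hXmeas n).pow_const 2).aestronglyMeasurable ?_
    filter_upwards [hXbd] with ω hω
    rw [Real.norm_eq_abs, abs_of_nonneg (sq_nonneg _)]
    have h := hω n
    nlinarith [abs_nonneg (X n ω), sq_abs (X n ω)]
  have hdiv_int : ∀ n : ℕ, Integrable (fun ω => X n ω ^ 2 / n) P := fun n => (hXsq_int n).div_const _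
  -- a.e. summability
  have hnn : ∀ n : ℕ, (0:ℝ) ≤ (∫ ω, X n ω ^ 2 ∂P) / n :=
    fun n => div_nonneg (integral_nonneg (fun ω => sq_nonneg _)) (Nat.cast_nonneg n)
  have hlin : ∀ n : ℕ, ∫⁻ ω, ENNReal.ofReal (X n ω ^ 2 / n) ∂P
      = ENNReal.ofReal ((∫ ω, X n ω ^ 2 ∂P) / n) := by
    intro n
    rw [← integral_div]
    exact (ofReal_integral_eq_lintegral_ofReal (hdiv_int n)
      (Eventually.of_forall fun ω => div_nonneg (sq_nonneg _) (Nat.cast_nonneg n))).symm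
  have hne : ∫⁻ ω, ∑' n : ℕ, ENNReal.ofReal (X n ω ^ 2 / n) ∂P ≠ ⊤ := by
    rw [lintegral_tsum (fun n => (((hXmeas n).pow_const 2).div_const _).ennreal_ofReal.aemeasurable)]
    have h1 : ∑' n : ℕ, ∫⁻ ω, ENNReal.ofReal (X n ω ^ 2 / n) ∂P
        = ENNReal.ofReal (∑' n : ℕ, (∫ ω, X n ω ^ 2 ∂P) / n) := by
      rw [tsum_congr hlin, ENNReal.ofReal_tsum_of_nonneg hnn hsum]
    rw [h1]
    exact ENNReal.ofReal_ne_top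
  have hae1 : ∀ᵐ ω ∂P, ∑' n : ℕ, ENNReal.ofReal (X n ω ^ 2 / n) < ⊤ :=
    ae_lt_top (Measurable.ennreal_tsum
      (fun n => (((hXmeas n).pow_const 2).div_const _).ennreal_ofReal)) hne
  have hae2 : ∀ᵐ ω ∂P, Summable (fun n : ℕ => X n ω ^ 2 / n) := by
    filter_upwards [hae1] with ω hω
    have hs := ENNReal.summable_toReal hω.ne
    refine (summable_congr (fun n => ?_)).mp hs
    rw [ENNReal.toReal_ofReal (div_nonneg (sq_nonneg _) (Nat.cast_nonneg n))]
  -- Lipschitz estimate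
  have hlip : ∀ᵐ ω ∂P, ∀ n m : ℕ, 1 ≤ n → n ≤ m →
      |X m ω - X n ω| ≤ (2 * C * d) * (((m:ℝ) - n) / n) := by
    filter_upwards [hE] with ω hω
    intro n m hn hnm
    have hnr : (0:ℝ) < n := by exact_mod_cast hn
    have hmr : (0:ℝ) < m := lt_of_lt_of_le hnr (by exact_mod_cast hnm)
    have hnd : (0:ℝ) < (n:ℝ)^d := pow_pos hnr d
    have hmd : (0:ℝ) < (m:ℝ)^d := pow_pos hmr d
    have hndm : (n:ℝ)^d ≤ (m:ℝ)^d := pow_le_pow_left₀ hnr.le (by exact_mod_cast hnm) d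
    have hsub : Fintype.piFinset (fun _ : Fin d => Finset.Icc 1 n)
        ⊆ Fintype.piFinset (fun _ : Fin d => Finset.Icc 1 m) :=
      Fintype.piFinset_subset _ _ fun _ => Finset.Icc_subset_Icc_right hnm
    set Sn := ∑ k ∈ Fintype.piFinset (fun _ : Fin d => Finset.Icc 1 n), ξ k ω with hSn
    set Sm := ∑ k ∈ Fintype.piFinset (fun _ : Fin d => Finset.Icc 1 m), ξ k ω with hSm
    have hSd : Sm - Sn = ∑ k ∈ Fintype.piFinset (fun _ : Fin d => Finset.Icc 1 m)
        \ Fintype.piFinset (fun _ : Fin d => Finset.Icc 1 n), ξ k ω :=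
      (Finset.sum_sdiff_eq_sub hsub).symm
    have h1 : |Sm - Sn| ≤ ((m:ℝ)^d - (n:ℝ)^d) * C := by
      rw [hSd]
      refine le_trans (Finset.abs_sum_le_sum_abs _ _) ?_
      have h2 : ∑ k ∈ _, |ξ k ω| ≤ (Fintype.piFinset (fun _ : Fin d => Finset.Icc 1 m)
          \ Fintype.piFinset (fun _ : Fin d => Finset.Icc 1 n)).card • C :=
        Finset.sum_le_card_nsmul _ _ _ (fun k _ => hω k)
      rw [Finset.card_sdiff_of_subset hsub, hcard, hcard, nsmul_eq_mul] at h2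
      refine le_trans h2 ?_
      have hmn : n ^ d ≤ m ^ d := Nat.pow_le_pow_left hnm d
      rw [Nat.cast_sub hmn, Nat.cast_pow, Nat.cast_pow]
    have h2 : |Sn| ≤ (n:ℝ)^d * C := hSbd ω hω n
    have hXm : X m ω = Sm / (m:ℝ)^d := hX m ω
    have hXn : X n ω = Sn / (n:ℝ)^d := hX n ω
    have key : |X m ω - X n ω| ≤ 2 * C * (((m:ℝ)^d - (n:ℝ)^d) / (m:ℝ)^d) := by
      rw [hXm, hXn]
      have expand : Sm / (m:ℝ)^d - Sn / (n:ℝ)^d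
          = (Sm - Sn) / (m:ℝ)^d + Sn * (1/(m:ℝ)^d - 1/(n:ℝ)^d) := by
        field_simp
        ring
      rw [expand]
      refine le_trans (abs_add_le _ _) ?_
      have t1 : |(Sm - Sn) / (m:ℝ)^d| ≤ (((m:ℝ)^d - (n:ℝ)^d) * C) / (m:ℝ)^d := by
        rw [abs_div, abs_of_pos hmd]
        exact div_le_div_of_nonneg_right h1 hmd.le
      have t2 : |Sn * (1/(m:ℝ)^d - 1/(n:ℝ)^d)| ≤ ((n:ℝ)^d * C) * (1/(n:ℝ)^d - 1/(m:ℝ)^d) := by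
        rw [abs_mul]
        have hle : 1/(m:ℝ)^d ≤ 1/(n:ℝ)^d := by
          apply one_div_le_one_div_of_le hnd hndm
        have habs2 : |1/(m:ℝ)^d - 1/(n:ℝ)^d| = 1/(n:ℝ)^d - 1/(m:ℝ)^d := by
          rw [abs_of_nonpos (by linarith)]
          ring
        rw [habs2]
        exact mul_le_mul_of_nonneg_right h2 (by linarith)
      have t3 : ((n:ℝ)^d * C) * (1/(n:ℝ)^d - 1/(m:ℝ)^d)
          = C * (((m:ℝ)^d - (n:ℝ)^d) / (m:ℝ)^d) := by
        field_simp
      have t4 : (((m:ℝ)^d - (n:ℝ)^d) * C) / (m:ℝ)^d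
          = C * (((m:ℝ)^d - (n:ℝ)^d) / (m:ℝ)^d) := by
        ring
      rw [t3] at t2
      rw [t4] at t1
      linarith
    refine le_trans key ?_
    have hber := bern_bound d n m hn hnm
    have h2C : (0:ℝ) ≤ 2 * C := by linarith
    calc 2 * C * (((m:ℝ)^d - (n:ℝ)^d) / (m:ℝ)^d)
        ≤ 2 * C * ((d:ℝ) * (((m:ℝ) - n) / n)) := mul_le_mul_of_nonneg_left hber h2C
      _ = (2 * C * d) * (((m:ℝ) - n) / n) := by ring
  -- combine
  have hK : (0:ℝ) < 2 * C * d := by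
    have : (0:ℝ) < d := by exact_mod_cast hd
    positivity
  filter_upwards [hlip, hae2] with ω h1 h2
  exact det_lemma (2 * C * d) hK (fun n => X n ω)
    (fun n m hn hnm => by simpa [mul_div_assoc] using h1 n m hn hnm) h2
end
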